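/- arXiv:2305.05129 — 2 statements merged into one kernel-verified Lean document; each statement's English description precedes it below -/
import Mathlib

section
/- There exists an input-consistent NFA over the two-letter ordered alphabet {a < b} that is quasi-Wheeler but not Wheeler. Concretely, the NFA with states Q = {s, 1, 2, 3, 4}, source s, and transitions δ_a(s) = {1, 2}, δ_b(s) = {3}, δ_b(1) = {3, 4}, δ_b(2) = {3, 4} admits no Wheeler order, while the total preorder given by the ordered partition ⟨{s}, {1, 2}, {3}, {4}⟩ is a Wheeler preorder for it. -/
/-- The image of a set of states `S` under the transitions labeled `a`. -/
def deltaSet {Q A : Type*} (δ : Q → A → Set Q) (a : A) (S : Set Q) : Set Q :=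
  ⋃ u ∈ S, δ u a

/-- Extension of the transition function to strings (lists of letters). -/
def deltaStr {Q A : Type*} (δ : Q → A → Set Q) : Q → List A → Set Q
  | v, [] => {v}
  | v, a :: w => ⋃ x ∈ δ v a, deltaStr δ x w

/-- `S` is forward-stable with respect to `T`. -/
def FwdStable {Q A : Type*} (δ : Q → A → Set Q) (S T : Set Q) : Prop :=
  ∀ a, S ⊆ deltaSet δ a T ∨ S ∩ deltaSet δ a T = ∅

/-- `P` is a forward-stable partition for the NFA `(Q, δ, s)`. -/
def FwdStablePartition {Q A : Type*} (δ : Q → A → Set Q) (P : Set (Set Q)) : Prop :=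
  Setoid.IsPartition P ∧ ∀ S ∈ P, ∀ T ∈ P, FwdStable δ S T

/-- `P'` is a refinement of `P`: every part of `P'` is contained in a part of `P`. -/
def Refines {Q : Type*} (P' P : Set (Set Q)) : Prop :=
  ∀ C ∈ P', ∃ D ∈ P, C ⊆ D

/-- `lt` is a Wheeler order on the NFA `(Q, δ, s)`: a strict total order putting
the source first and satisfying the two Wheeler axioms. -/
def IsWheelerOrder {Q A : Type*} [LT A] (δ : Q → A → Set Q) (s : Q)
    (lt : Q → Q → Prop) : Prop :=
  (∀ x, ¬ lt x x) ∧
  (∀ x y z, lt x y → lt y z → lt x z) ∧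
  (∀ x y, x ≠ y → lt x y ∨ lt y x) ∧
  (∀ v, v ≠ s → lt s v) ∧
  (∀ u u' v v' (a a' : A), v ∈ δ u a → v' ∈ δ u' a' →
    (a < a' → lt v v') ∧ (a = a' → lt u u' → v ≠ v' → lt v v'))

/-- The equivalence classes of the equivalence relation induced by
the total preorder `le` (`u ∼ v` iff `le u v` and `le v u`). -/
def simClasses {Q : Type*} (le : Q → Q → Prop) : Set (Set Q) :=
  {C | ∃ u, C = {v | le u v ∧ le v u}}

/-- `le` is a Wheeler preorder on the NFA `(Q, δ, s)`: a total preorder whose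
induced partition `Q/∼` is the coarsest forward-stable partition and whose
quotient automaton `A/∼` is Wheeler under the induced strict total order. -/
def IsWheelerPreorder {Q A : Type*} [LT A] (δ : Q → A → Set Q) (s : Q)
    (le : Q → Q → Prop) : Prop :=
  -- `le` is a total preorder
  (∀ x, le x x) ∧
  (∀ x y z, le x y → le y z → le x z) ∧
  (∀ x y, le x y ∨ le y x) ∧
  -- the induced partition is the coarsest forward-stable partition
  (FwdStablePartition δ (simClasses le) ∧
    ∀ P, FwdStablePartition δ P → Refines P (simClasses le)) ∧
  -- the quotient automaton is Wheeler under the induced strict total order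
  IsWheelerOrder
    (fun (C : {C : Set Q // C ∈ simClasses le}) (a : A) =>
      {D : {C : Set Q // C ∈ simClasses le} | ∃ u ∈ C.1, ∃ v ∈ D.1, v ∈ δ u a})
    ⟨{v | le s v ∧ le v s}, ⟨s, rfl⟩⟩
    (fun C D => ∃ u ∈ C.1, ∃ v ∈ D.1, le u v ∧ ¬ le v u)

/-- The NFA from the paper: states `{s,1,2,3,4}` (with `s = 0`), alphabet
`{a < b}` (with `a = 0`, `b = 1`), and transitions
`δ_a(s) = {1,2}`, `δ_b(s) = {3}`, `δ_b(1) = δ_b(2) = {3,4}`. -/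
def ex7δ : Fin 5 → Fin 2 → Set (Fin 5) := fun u a =>
  if u = 0 ∧ a = 0 then {1, 2}
  else if u = 0 ∧ a = 1 then {3}
  else if (u = 1 ∨ u = 2) ∧ a = 1 then {3, 4}
  else ∅

/-- Rank function realizing the ordered partition `⟨{s}, {1,2}, {3}, {4}⟩`. -/
def ex7rank : Fin 5 → ℕ := ![0, 1, 1, 2, 3]

def tr (u : Fin 5) (a : Fin 2) (v : Fin 5) : Prop :=
  (u = 0 ∧ a = 0 ∧ (v = 1 ∨ v = 2)) ∨ (u = 0 ∧ a = 1 ∧ v = 3) ∨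
  ((u = 1 ∨ u = 2) ∧ a = 1 ∧ (v = 3 ∨ v = 4))

instance (u a v) : Decidable (tr u a v) := by unfold tr; infer_instance

lemma mem_ex7δ (v u : Fin 5) (a : Fin 2) : v ∈ ex7δ u a ↔ tr u a v := by
  unfold ex7δ tr
  split_ifs with h1 h2 h3 <;>
    simp_all [Set.mem_insert_iff, Set.mem_singleton_iff] <;> tauto

lemma mem_deltaSet {Q A : Type*} (δ : Q → A → Set Q) (a : A) (S : Set Q) (v : Q) :
    v ∈ deltaSet δ a S ↔ ∃ u ∈ S, v ∈ δ u a := by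
  simp [deltaSet]

def cls (u : Fin 5) : Set (Fin 5) :=
  {v | ex7rank u ≤ ex7rank v ∧ ex7rank v ≤ ex7rank u}

lemma mem_cls (u v : Fin 5) : v ∈ cls u ↔ ex7rank v = ex7rank u := by
  simp only [cls, Set.mem_setOf_eq]; omega

lemma self_mem_cls (u : Fin 5) : u ∈ cls u := (mem_cls u u).mpr rfl

lemma cls_eq_of_rank {u v : Fin 5} (h : ex7rank u = ex7rank v) : cls u = cls v := by
  ext w; rw [mem_cls, mem_cls, h]

lemma rank_of_cls_eq {u v : Fin 5} (h : cls u = cls v) : ex7rank u = ex7rank v := by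
  have := self_mem_cls u
  rw [h, mem_cls] at this
  exact this




lemma fwd_cls' (u0 t0 : Fin 5) : FwdStable ex7δ (cls u0) (cls t0) := by
  intro a
  have key : (∀ v : Fin 5, ex7rank v = ex7rank u0 →
      ∃ u : Fin 5, ex7rank u = ex7rank t0 ∧ tr u a v) ∨
      (∀ v : Fin 5, ¬(ex7rank v = ex7rank u0 ∧
        ∃ u : Fin 5, ex7rank u = ex7rank t0 ∧ tr u a v)) := by
    revert a u0 t0
    decide
  rcases key with h | h
  · left
    intro v hv
    rw [mem_cls] at hv
    obtain ⟨u, hu, htr⟩ := h v hv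
    rw [mem_deltaSet]
    exact ⟨u, (mem_cls _ _).mpr hu, (mem_ex7δ _ _ _).mpr htr⟩
  · right
    rw [Set.eq_empty_iff_forall_notMem]
    rintro v ⟨hv, hvd⟩
    rw [mem_deltaSet] at hvd
    obtain ⟨u, hu, huv⟩ := hvd
    exact h v ⟨(mem_cls _ _).mp hv, u, (mem_cls _ _).mp hu, (mem_ex7δ _ _ _).mp huv⟩
lemma no_in_zero : ∀ (u : Fin 5) (a : Fin 2), ¬ tr u a 0 := by decide

lemma has_incoming : ∀ v : Fin 5, v ≠ 0 → ∃ u a, tr u a v := by decide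

lemma coarsest_aux (P : Set (Set (Fin 5)))
    (hpart : Setoid.IsPartition P)
    (hstab : ∀ S ∈ P, ∀ T ∈ P, FwdStable ex7δ S T) :
    ∀ C ∈ P, ∀ x ∈ C, ∀ y ∈ C, ex7rank x = ex7rank y := by
  obtain ⟨hne, hcov⟩ := hpart
  -- key tool
  have hsub : ∀ C ∈ P, ∀ T ∈ P, ∀ (a : Fin 2) (x u : Fin 5),
      x ∈ C → u ∈ T → tr u a x → C ⊆ deltaSet ex7δ a T := by
    intro C hC T hT a x u hx hu hxa
    rcases hstab C hC T hT a with h | h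
    · exact h
    · exfalso
      have : x ∈ C ∩ deltaSet ex7δ a T :=
        ⟨hx, (mem_deltaSet _ _ _ _).mpr ⟨u, hu, (mem_ex7δ _ _ _).mpr hxa⟩⟩
      rw [h] at this
      exact this
  -- part containing 0
  obtain ⟨T0, ⟨hT0P, h0T0⟩, _⟩ := hcov 0
  -- a part containing 0 is {0}
  have stepC : ∀ C ∈ P, (0 : Fin 5) ∈ C → ∀ y ∈ C, y = 0 := by
    intro C hC h0 y hy
    by_contra hne0
    obtain ⟨u, a, htr⟩ := has_incoming y hne0
    obtain ⟨T, ⟨hTP, huT⟩, _⟩ := hcov u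
    have hCsub := hsub C hC T hTP a y u hy huT htr
    have h0d := hCsub h0
    rw [mem_deltaSet] at h0d
    obtain ⟨u', hu', h0'⟩ := h0d
    exact no_in_zero u' a ((mem_ex7δ _ _ _).mp h0')
  -- if C contains an element of rank 1, everything in C has rank 1
  have h12 : ∀ C ∈ P, ∀ x ∈ C, ex7rank x = 1 → ∀ y ∈ C, ex7rank y = 1 := by
    intro C hC x hx hrx y hy
    have hx12 : x = 1 ∨ x = 2 := by revert hrx; fin_cases x <;> simp [ex7rank] <;> decide
    have htr : tr 0 0 x := by rcases hx12 with h | h <;> subst h <;> decide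
    have hCsub := hsub C hC T0 hT0P 0 x 0 hx h0T0 htr
    have hyd := hCsub hy
    rw [mem_deltaSet] at hyd
    obtain ⟨u', hu', hy'⟩ := hyd
    have := (mem_ex7δ _ _ _).mp hy'
    have : y = 1 ∨ y = 2 := by
      rcases this with ⟨_, _, h⟩ | ⟨_, h, _⟩ | ⟨_, h, _⟩
      · exact h
      · exact absurd h (by decide)
      · exact absurd h (by decide)
    rcases this with h | h <;> subst h <;> rfl
  -- 3 and 4 cannot coexist
  have pair34 : ∀ C ∈ P, (3 : Fin 5) ∈ C → (4 : Fin 5) ∈ C → False := by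
    intro C hC h3 h4
    have hCsub := hsub C hC T0 hT0P 1 3 0 h3 h0T0 (by decide)
    have h4d := hCsub h4
    rw [mem_deltaSet] at h4d
    obtain ⟨u', hu', h4'⟩ := h4d
    have hu0 : u' = 0 := stepC T0 hT0P h0T0 u' hu'
    subst hu0
    exact (by decide : ¬ tr 0 1 4) ((mem_ex7δ _ _ _).mp h4')
  -- now the main claim
  intro C hC x hx y hy
  fin_cases x <;> fin_cases y <;> first
    | rfl
    | (exact absurd (stepC C hC hx _ hy) (by decide))
    | (exact absurd (stepC C hC hy _ hx) (by decide))
    | (exact (h12 C hC _ hx rfl _ hy).symm ▸ rfl)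
    | (exact absurd (h12 C hC _ hx rfl _ hy) (by decide))
    | (exact absurd (h12 C hC _ hy rfl _ hx) (by decide))
    | (exact absurd (pair34 C hC hx hy) (by simp))
    | (exact absurd (pair34 C hC hy hx) (by simp))
    | (exact (h12 C hC _ hy rfl _ hx).trans (h12 C hC _ hx rfl _ hy).symm)

lemma class_rep {C : Set (Fin 5)}
    (hC : C ∈ simClasses (fun u v => ex7rank u ≤ ex7rank v))
    {x : Fin 5} (hx : x ∈ C) : C = cls x := by
  obtain ⟨u, rfl⟩ := hC
  exact cls_eq_of_rank ((mem_cls u x).mp hx).symm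

lemma rank_eq_mem {C : Set (Fin 5)}
    (hC : C ∈ simClasses (fun u v => ex7rank u ≤ ex7rank v))
    {x y : Fin 5} (hx : x ∈ C) (hy : y ∈ C) : ex7rank x = ex7rank y := by
  have : x ∈ cls y := by rw [← class_rep hC hy]; exact hx
  exact (mem_cls y x).mp this

lemma input_consistent : ∀ v : Fin 5, v ≠ 0 → ∃ a : Fin 2, (∃ u, tr u a v) ∧
    ∀ b : Fin 2, (∃ u, tr u b v) → b = a := by decide

lemma key_ax1 : ∀ a a' : Fin 2, a < a' → ∀ u u' v v' : Fin 5,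
    tr u a v → tr u' a' v' → ex7rank v < ex7rank v' := by decide

lemma key_ax2 : ∀ a : Fin 2, ∀ u u' v v' : Fin 5, tr u a v → tr u' a v' →
    ex7rank u < ex7rank u' → ex7rank v ≠ ex7rank v' → ex7rank v < ex7rank v' := by decide

/-- There is an input-consistent NFA over a two-letter ordered alphabet that is
quasi-Wheeler but not Wheeler: the concrete NFA `ex7δ` is input-consistent,
admits no Wheeler order, and the total preorder given by the ordered partition
`⟨{s}, {1,2}, {3}, {4}⟩` is a Wheeler preorder for it. -/
theorem stmt7 :
    (∀ v : Fin 5, v ≠ 0 → ∃! a : Fin 2, ∃ u, v ∈ ex7δ u a) ∧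
    (¬ ∃ lt : Fin 5 → Fin 5 → Prop, IsWheelerOrder ex7δ 0 lt) ∧
    IsWheelerPreorder ex7δ 0 (fun u v => ex7rank u ≤ ex7rank v) := by
  refine ⟨?_, ?_, ?_⟩
  · -- input consistency
    intro v hv
    simp only [mem_ex7δ]
    exact input_consistent v hv
  · -- not Wheeler
    rintro ⟨lt, hirr, htrans, htot, hs, hW⟩
    have m1 : (3 : Fin 5) ∈ ex7δ 0 1 := (mem_ex7δ _ _ _).mpr (by decide)
    have m2 : (4 : Fin 5) ∈ ex7δ 1 1 := (mem_ex7δ _ _ _).mpr (by decide)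
    have m3 : (4 : Fin 5) ∈ ex7δ 2 1 := (mem_ex7δ _ _ _).mpr (by decide)
    have m4 : (3 : Fin 5) ∈ ex7δ 1 1 := (mem_ex7δ _ _ _).mpr (by decide)
    have m5 : (3 : Fin 5) ∈ ex7δ 2 1 := (mem_ex7δ _ _ _).mpr (by decide)
    have h34 : lt 3 4 := (hW 0 1 3 4 1 1 m1 m2).2 rfl (hs 1 (by decide)) (by decide)
    rcases htot 1 2 (by decide) with h12 | h21
    · have h43 : lt 4 3 := (hW 1 2 4 3 1 1 m2 m5).2 rfl h12 (by decide)
      exact hirr 3 (htrans _ _ _ h34 h43)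
    · have h43 : lt 4 3 := (hW 2 1 4 3 1 1 m3 m4).2 rfl h21 (by decide)
      exact hirr 3 (htrans _ _ _ h34 h43)
  · -- Wheeler preorder
    refine ⟨fun x => le_refl _, fun x y z h1 h2 => le_trans h1 h2,
      fun x y => Nat.le_total _ _, ⟨⟨⟨?_, ?_⟩, ?_⟩, ?_⟩, ?_, ?_, ?_, ?_, ?_⟩
    · -- ∅ not a class
      rintro ⟨u, hu⟩
      have : u ∈ (∅ : Set (Fin 5)) := by rw [hu]; exact self_mem_cls u
      exact this
    · -- covering
      intro x
      refine ⟨cls x, ⟨⟨x, rfl⟩, self_mem_cls x⟩, ?_⟩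
      rintro b ⟨⟨u, rfl⟩, hx⟩
      exact cls_eq_of_rank ((mem_cls u x).mp hx).symm
    · -- stability
      rintro S ⟨u, rfl⟩ T ⟨t, rfl⟩
      exact fwd_cls' u t
    · -- coarsest
      intro P hP C hC
      obtain ⟨hpart, hstab⟩ := hP
      have hCne : C.Nonempty := Set.nonempty_iff_ne_empty.mpr (fun h => hpart.1 (h ▸ hC))
      obtain ⟨x, hx⟩ := hCne
      refine ⟨cls x, ⟨x, rfl⟩, ?_⟩
      intro y hy
      exact (mem_cls x y).mpr (coarsest_aux P hpart hstab C hC y hy x hx)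
    · -- irreflexivity of quotient order
      rintro C ⟨u, hu, v, hv, h1, h2⟩
      have a1 : ex7rank u ≤ ex7rank v := h1
      have a2 : ¬ ex7rank v ≤ ex7rank u := h2
      have := rank_eq_mem C.2 hu hv
      omega
    · -- transitivity
      rintro C D E ⟨u, hu, v, hv, h1, h2⟩ ⟨p, hp, q, hq, h3, h4⟩
      have a1 : ex7rank u ≤ ex7rank v := h1
      have a2 : ¬ ex7rank v ≤ ex7rank u := h2
      have a3 : ex7rank p ≤ ex7rank q := h3
      have a4 : ¬ ex7rank q ≤ ex7rank p := h4
      have a5 : ex7rank v = ex7rank p := rank_eq_mem D.2 hv hp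
      exact ⟨u, hu, q, hq, (by omega : ex7rank u ≤ ex7rank q),
        (by omega : ¬ ex7rank q ≤ ex7rank u)⟩
    · -- totality
      intro C D hne
      obtain ⟨c, hc⟩ := C.2
      obtain ⟨d, hd⟩ := D.2
      have hcC : c ∈ C.1 := by rw [hc]; exact self_mem_cls c
      have hdD : d ∈ D.1 := by rw [hd]; exact self_mem_cls d
      by_cases h : ex7rank c = ex7rank d
      · exact absurd (Subtype.ext (by rw [hc, hd]; exact cls_eq_of_rank h)) hne
      · rcases Nat.lt_or_ge (ex7rank c) (ex7rank d) with hlt | hge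
        · exact Or.inl ⟨c, hcC, d, hdD, (by omega : ex7rank c ≤ ex7rank d),
            (by omega : ¬ ex7rank d ≤ ex7rank c)⟩
        · exact Or.inr ⟨d, hdD, c, hcC, (by omega : ex7rank d ≤ ex7rank c),
            (by omega : ¬ ex7rank c ≤ ex7rank d)⟩
    · -- source is first
      intro V hV
      obtain ⟨v0, hv0⟩ := V.2
      have hv0V : v0 ∈ V.1 := by rw [hv0]; exact self_mem_cls v0
      by_cases h : ex7rank v0 = ex7rank 0
      · exact absurd (Subtype.ext (by rw [hv0]; exact (cls_eq_of_rank h.symm : cls 0 = cls v0))).symm hV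
      · have h0 : ex7rank 0 = 0 := rfl
        exact ⟨0, self_mem_cls 0, v0, hv0V, (by omega : ex7rank 0 ≤ ex7rank v0),
          (by omega : ¬ ex7rank v0 ≤ ex7rank 0)⟩
    · -- Wheeler axioms on the quotient
      rintro U U' V V' a a' ⟨u, hu, v, hv, hva⟩ ⟨u', hu', v', hv', hva'⟩
      have t1 : tr u a v := (mem_ex7δ _ _ _).mp hva
      have t2 : tr u' a' v' := (mem_ex7δ _ _ _).mp hva'
      constructor
      · intro haa'
        have hlt := key_ax1 a a' haa' u u' v v' t1 t2
        exact ⟨v, hv, v', hv', (by omega : ex7rank v ≤ ex7rank v'),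
          (by omega : ¬ ex7rank v' ≤ ex7rank v)⟩
      · rintro rfl hUU' hVV'
        obtain ⟨p, hp, q, hq, l1, l2⟩ := hUU'
        have b1 : ex7rank p ≤ ex7rank q := l1
        have b2 : ¬ ex7rank q ≤ ex7rank p := l2
        have b3 : ex7rank u = ex7rank p := rank_eq_mem U.2 hu hp
        have b4 : ex7rank u' = ex7rank q := rank_eq_mem U'.2 hu' hq
        have hVne : ex7rank v ≠ ex7rank v' := by
          intro h
          apply hVV'
          apply Subtype.ext
          rw [class_rep V.2 hv, class_rep V'.2 hv']
          exact cls_eq_of_rank h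
        have hlt := key_ax2 a u u' v v' t1 t2 (by omega) hVne
        exact ⟨v, hv, v', hv', (by omega : ex7rank v ≤ ex7rank v'),
          (by omega : ¬ ex7rank v' ≤ ex7rank v)⟩
end

section
/- Let A = (Q, δ, s) be an NFA whose source s has no in-going transitions and in which every state is reachable from s, let P be a forward-stable partition for A, and let ∼ be the equivalence relation on Q with u ∼ v iff u and v lie in the same part of P. Then for every v ∈ Q, the set of strings reaching the state [v]_∼ in the quotient automaton A/∼ equals S_v (the set of strings reaching v in A). -/
/-- `reach δ s v` is the set `S_v` of strings reaching `v` from the source `s`. -/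
def reach {Q A : Type*} (δ : Q → A → Set Q) (s v : Q) : Set (List A) :=
  {α | v ∈ deltaStr δ s α}

/-- The transition function of the quotient automaton `A/∼` induced by the
partition `P`: its states are the parts of `P`, and a part `D` is an
`a`-successor of a part `C` if some state of `D` is an `a`-successor of some
state of `C`. -/
def quotDelta {Q A : Type*} (δ : Q → A → Set Q) (P : Set (Set Q)) :
    {C : Set Q // C ∈ P} → A → Set {C : Set Q // C ∈ P} :=
  fun C a => {D | ∃ u ∈ C.1, ∃ v ∈ D.1, v ∈ δ u a}

lemma deltaStr_append {Q A : Type*} (δ : Q → A → Set Q) (s : Q) (α β : List A) :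
    deltaStr δ s (α ++ β) = ⋃ x ∈ deltaStr δ s α, deltaStr δ x β := by
  induction α generalizing s with
  | nil => simp [deltaStr]
  | cons a α ih =>
    simp only [List.cons_append, deltaStr, ih]
    ext y
    simp only [Set.mem_iUnion, deltaStr]
    aesop

lemma deltaStr_concat {Q A : Type*} (δ : Q → A → Set Q) (s : Q) (α : List A) (a : A) :
    deltaStr δ s (α ++ [a]) = deltaSet δ a (deltaStr δ s α) := by
  rw [deltaStr_append]
  simp [deltaSet, deltaStr]

lemma deltaSet_mono {Q A : Type*} (δ : Q → A → Set Q) (a : A) {S T : Set Q}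
    (h : S ⊆ T) : deltaSet δ a S ⊆ deltaSet δ a T := by
  intro x hx
  simp only [deltaSet, Set.mem_iUnion] at hx ⊢
  obtain ⟨u, hu, hx⟩ := hx
  exact ⟨u, h hu, hx⟩

lemma part_eq_of_mem {Q : Type*} {P : Set (Set Q)} (hpart : Setoid.IsPartition P)
    {C D : Set Q} (hC : C ∈ P) (hD : D ∈ P) {x : Q} (hxC : x ∈ C) (hxD : x ∈ D) :
    C = D := by
  obtain ⟨b, _, huniq⟩ := hpart.2 x
  rw [huniq C ⟨hC, hxC⟩, huniq D ⟨hD, hxD⟩]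

lemma source_class_eq {Q A : Type*} (δ : Q → A → Set Q) (s : Q)
    (hs : ∀ u a, s ∉ δ u a)
    (hreach : ∀ v : Q, ∃ α, v ∈ deltaStr δ s α)
    {P : Set (Set Q)} (hP : FwdStablePartition δ P)
    {Cs : Set Q} (hCs : Cs ∈ P) (hsCs : s ∈ Cs) :
    Cs = {s} := by
  ext u
  constructor
  · intro hu
    obtain ⟨α, hα⟩ := hreach u
    rcases List.eq_nil_or_concat α with rfl | ⟨β, a, rfl⟩
    · exact hα
    · rw [List.concat_eq_append, deltaStr_concat] at hα
      simp only [deltaSet, Set.mem_iUnion] at hα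
      obtain ⟨w, hw, hu'⟩ := hα
      obtain ⟨T, ⟨hT, hwT⟩, _⟩ := hP.1.2 w
      have hmem : u ∈ deltaSet δ a T := by
        simp only [deltaSet, Set.mem_iUnion]; exact ⟨w, hwT, hu'⟩
      rcases hP.2 Cs hCs T hT a with h | h
      · have := h hsCs
        simp only [deltaSet, Set.mem_iUnion] at this
        obtain ⟨x, _, hx⟩ := this
        exact absurd hx (hs x a)
      · exact absurd (Set.mem_inter hu hmem) (by rw [h]; exact id)
  · rintro rfl; exact hsCs

lemma saturated {Q A : Type*} (δ : Q → A → Set Q) (s : Q)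
    {P : Set (Set Q)} (hP : FwdStablePartition δ P) (hsP : ({s} : Set Q) ∈ P) :
    ∀ α : List A, ∀ C ∈ P, (C ∩ deltaStr δ s α).Nonempty → C ⊆ deltaStr δ s α := by
  intro α
  induction α using List.reverseRecOn with
  | nil =>
    rintro C hC ⟨x, hxC, hxs⟩
    have : C = {s} := part_eq_of_mem hP.1 hC hsP hxC hxs
    rw [this]; exact Set.Subset.rfl
  | append_singleton β a ih =>
    rintro C hC ⟨x, hxC, hx⟩
    rw [deltaStr_concat] at hx ⊢
    simp only [deltaSet, Set.mem_iUnion] at hx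
    obtain ⟨u, hu, hxu⟩ := hx
    obtain ⟨T, ⟨hT, huT⟩, _⟩ := hP.1.2 u
    have hTsub : T ⊆ deltaStr δ s β := ih T hT ⟨u, huT, hu⟩
    rcases hP.2 C hC T hT a with h | h
    · exact h.trans (deltaSet_mono δ a hTsub)
    · exfalso
      have hxT : x ∈ deltaSet δ a T := by
        simp only [deltaSet, Set.mem_iUnion]; exact ⟨u, huT, hxu⟩
      have : x ∈ C ∩ deltaSet δ a T := ⟨hxC, hxT⟩
      rw [h] at this
      exact this

lemma quot_mem_iff {Q A : Type*} (δ : Q → A → Set Q) (s : Q)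
    {P : Set (Set Q)} (hP : FwdStablePartition δ P)
    {Cs : Set Q} (hCs : Cs ∈ P) (hsCs : s ∈ Cs) (hCseq : Cs = {s}) :
    ∀ (α : List A) (D : Set Q) (hD : D ∈ P),
      ((⟨D, hD⟩ : {C : Set Q // C ∈ P}) ∈ deltaStr (quotDelta δ P) ⟨Cs, hCs⟩ α
        ↔ (D ∩ deltaStr δ s α).Nonempty) := by
  have hsP : ({s} : Set Q) ∈ P := hCseq ▸ hCs
  intro α
  induction α using List.reverseRecOn with
  | nil =>
    intro D hD
    constructor
    · intro h
      have : D = Cs := congrArg Subtype.val h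
      subst this
      exact ⟨s, hsCs, rfl⟩
    · rintro ⟨x, hxD, hxs⟩
      have : D = Cs := by
        rw [hCseq]
        exact part_eq_of_mem hP.1 hD hsP hxD hxs
      exact Subtype.ext this
  | append_singleton β a ih =>
    intro D hD
    rw [deltaStr_concat, deltaStr_concat]
    constructor
    · intro h
      simp only [deltaSet, Set.mem_iUnion] at h
      obtain ⟨C', hC', hmem⟩ := h
      obtain ⟨u, huC, w, hwD, hw⟩ := hmem
      have hne : (C'.1 ∩ deltaStr δ s β).Nonempty := (ih C'.1 C'.2).mp hC'
      have hsub : C'.1 ⊆ deltaStr δ s β := saturated δ s hP hsP β C'.1 C'.2 hne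
      refine ⟨w, hwD, ?_⟩
      simp only [deltaSet, Set.mem_iUnion]
      exact ⟨u, hsub huC, hw⟩
    · rintro ⟨w, hwD, hw⟩
      simp only [deltaSet, Set.mem_iUnion] at hw ⊢
      obtain ⟨u, hu, hwu⟩ := hw
      obtain ⟨C, ⟨hC, huC⟩, _⟩ := hP.1.2 u
      refine ⟨⟨C, hC⟩, (ih C hC).mpr ⟨u, huC, hu⟩, ?_⟩
      exact ⟨u, huC, w, hwD, hwu⟩

/-- Let `P` be a forward-stable partition for an NFA whose source has no
in-going transitions and in which every state is reachable from the source.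
Then for every state `v`, the set of strings reaching the class of `v` in the
quotient automaton `A/∼` equals the set of strings reaching `v` in `A`. -/
theorem stmt11 {Q A : Type*} [Fintype Q] [Fintype A] [LinearOrder A]
    (δ : Q → A → Set Q) (s : Q)
    (hs : ∀ u a, s ∉ δ u a)
    (hreach : ∀ v : Q, ∃ α, v ∈ deltaStr δ s α)
    (P : Set (Set Q)) (hP : FwdStablePartition δ P)
    (Cs : Set Q) (hCs : Cs ∈ P) (hsCs : s ∈ Cs)
    (v : Q) (Cv : Set Q) (hCv : Cv ∈ P) (hvCv : v ∈ Cv) :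
    reach (quotDelta δ P) ⟨Cs, hCs⟩ ⟨Cv, hCv⟩ = reach δ s v := by
  have hCseq : Cs = {s} := source_class_eq δ s hs hreach hP hCs hsCs
  have hsP : ({s} : Set Q) ∈ P := hCseq ▸ hCs
  ext α
  simp only [reach, Set.mem_setOf_eq]
  rw [quot_mem_iff δ s hP hCs hsCs hCseq α Cv hCv]
  constructor
  · intro hne
    exact saturated δ s hP hsP α Cv hCv hne hvCv
  · intro hv
    exact ⟨v, hvCv, hv⟩
end
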